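/- arXiv:1712.02374 — 3 statements merged into one kernel-verified Lean document; each statement's English description precedes it below -/
import Mathlib

section
/- The Vandermonde polynomial satisfies the identity P_n(x_1,...,x_n) = ∑_{i=1}^n (-1)^{i+n} (∏_{j≠i} x_j) P_{n-1}(x_1,...,x̂_i,...,x_n). -/
/-- The Vandermonde polynomial `∏_{a < b} (x a - x b)`. -/
def vand (n : ℕ) (x : Fin n → ℂ) : ℂ :=
  ∏ p ∈ Finset.univ.filter (fun p : Fin n × Fin n => p.1 < p.2), (x p.1 - x p.2)

lemma vand_nested (n : ℕ) (x : Fin n → ℂ) :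
    vand n x = ∏ i : Fin n, ∏ j ∈ Finset.Ioi i, (x i - x j) := by
  rw [vand, Finset.prod_sigma']
  refine Finset.prod_nbij' (fun p => ⟨p.1, p.2⟩) (fun p => (p.1, p.2)) ?_ ?_ ?_ ?_ ?_
  · rintro ⟨i, j⟩ h
    simp only [Finset.mem_filter, Finset.mem_univ, true_and] at h
    simp [h]
  · rintro ⟨i, j⟩ h
    simp only [Finset.mem_sigma, Finset.mem_Ioi] at h
    simp [h.2]
  · rintro ⟨i, j⟩ _; rfl
  · rintro ⟨i, j⟩ _; rfl
  · rintro ⟨i, j⟩ _; rfl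

lemma vand_eq_det (n : ℕ) (x : Fin n → ℂ) :
    vand n x = (-1 : ℂ) ^ (n.choose 2) * (Matrix.vandermonde x).det := by
  rw [vand_nested, Matrix.det_vandermonde]
  have h1 : ∀ i : Fin n, ∏ j ∈ Finset.Ioi i, (x i - x j)
      = (-1 : ℂ) ^ (Finset.Ioi i).card * ∏ j ∈ Finset.Ioi i, (x j - x i) := by
    intro i
    rw [← Finset.prod_const, ← Finset.prod_mul_distrib]
    exact Finset.prod_congr rfl fun j _ => by ring
  simp_rw [h1]
  rw [Finset.prod_mul_distrib, Finset.prod_pow_eq_pow_sum]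
  congr 2
  simp_rw [Fin.card_Ioi]
  rw [Fin.sum_univ_eq_sum_range (fun i => n - 1 - i), ← Finset.sum_range_reflect]
  rw [Nat.choose_two_right, ← Finset.sum_range_id]
  exact Finset.sum_congr rfl fun i hi => by
    rw [Finset.mem_range] at hi; omega

lemma prod_succAbove {n : ℕ} (i : Fin (n + 1)) (x : Fin (n + 1) → ℂ) :
    ∏ k : Fin n, x (i.succAbove k) = ∏ j ∈ Finset.univ.erase i, x j := by
  refine Finset.prod_bij (fun k _ => i.succAbove k) ?_ ?_ ?_ ?_
  · intro k _; simp [Fin.succAbove_ne i k]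
  · intro a _ b _ h; exact i.succAbove_right_injective h
  · intro j hj
    rw [Finset.mem_erase] at hj
    obtain ⟨k, hk⟩ := Fin.exists_succAbove_eq hj.1
    exact ⟨k, Finset.mem_univ k, hk⟩
  · intro k _; rfl

theorem stmt_5 (n : ℕ) (x : Fin (n + 1) → ℂ) :
    vand (n + 1) x =
      ∑ i : Fin (n + 1), (-1 : ℂ) ^ ((i : ℕ) + n) *
        (∏ j ∈ Finset.univ.erase i, x j) *
        vand n (fun k => x (i.succAbove k)) := by
  rw [vand_eq_det, Matrix.det_succ_column_zero, Finset.mul_sum]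
  refine Finset.sum_congr rfl fun i _ => ?_
  have hsub : (Matrix.vandermonde x).submatrix i.succAbove Fin.succ
      = Matrix.of fun k l => x (i.succAbove k) *
          Matrix.vandermonde (fun k => x (i.succAbove k)) k l := by
    ext k l
    simp [Matrix.vandermonde, pow_succ, mul_comm]
  rw [hsub, Matrix.det_mul_column, prod_succAbove]
  have hv : (Matrix.vandermonde fun k => x (i.succAbove k)).det
      = (-1 : ℂ) ^ (n.choose 2) * vand n (fun k => x (i.succAbove k)) := by
    rw [vand_eq_det, ← mul_assoc, ← pow_add, ← two_mul, pow_mul]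
    norm_num
  rw [hv]
  have hA : Matrix.vandermonde x i 0 = 1 := by simp [Matrix.vandermonde]
  rw [hA]
  have hc : (n + 1).choose 2 = n + n.choose 2 := by
    rw [Nat.choose_succ_succ]
    simp [Nat.choose_one_right, Nat.add_comm]
  rw [hc]
  ring_nf
  rw [mul_comm (n.choose 2) 2, pow_mul]
  norm_num
end

section
/- If D = d/dx denotes differentiation, L = D² + q (multiplication by a smooth function q), and P = -4D³ - 6qD - 3q_x, then the commutator [L, P] = LP - PL acts as multiplication by q_{xxx} + 6 q q_x. -/
/-- The Schrödinger operator `L f = f'' + q f`. -/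
noncomputable def Lop (q f : ℝ → ℝ) : ℝ → ℝ := fun x => deriv (deriv f) x + q x * f x

/-- The operator `P f = -4 f''' - 6 q f' - 3 q' f`. -/
noncomputable def Pop (q f : ℝ → ℝ) : ℝ → ℝ := fun x =>
  -4 * deriv (deriv (deriv f)) x - 6 * q x * deriv f x - 3 * deriv q x * f x

private lemma cdD {f : ℝ → ℝ} (hf : ContDiff ℝ (⊤ : ℕ∞) f) : ContDiff ℝ (⊤ : ℕ∞) (deriv f) :=
  (contDiff_infty_iff_deriv.mp hf).2

private lemma hdD {f : ℝ → ℝ} (hf : ContDiff ℝ (⊤ : ℕ∞) f) (x : ℝ) : HasDerivAt f (deriv f x) x :=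
  ((hf.differentiable (by simp)) x).hasDerivAt

theorem stmt_6 (q y : ℝ → ℝ) (hq : ContDiff ℝ (⊤ : ℕ∞) q) (hy : ContDiff ℝ (⊤ : ℕ∞) y) (x : ℝ) :
    Lop q (Pop q y) x - Pop q (Lop q y) x =
      (deriv (deriv (deriv q)) x + 6 * q x * deriv q x) * y x := by
  have hq' : ContDiff ℝ (⊤ : ℕ∞) q := hq.of_le (by simp)
  have hy' : ContDiff ℝ (⊤ : ℕ∞) y := hy.of_le (by simp)
  have hq1 := cdD hq'; have hq2 := cdD hq1; have hq3 := cdD hq2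
  have hy1 := cdD hy'; have hy2 := cdD hy1; have hy3 := cdD hy2
  have hy4 := cdD hy3; have hy5 := cdD hy4
  -- first derivative of Pop q y
  have hP : ∀ t, HasDerivAt (Pop q y)
      (-4 * deriv (deriv (deriv (deriv y))) t
        - (6 * deriv q t * deriv y t + 6 * q t * deriv (deriv y) t)
        - (3 * deriv (deriv q) t * y t + 3 * deriv q t * deriv y t)) t := by
    intro t
    exact (((hdD hy3 t).const_mul (-4)).sub (((hdD hq' t).const_mul 6).mul (hdD hy1 t))).sub
      (((hdD hq1 t).const_mul 3).mul (hdD hy' t))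
  have eA : deriv (Pop q y) = fun t =>
      -4 * deriv (deriv (deriv (deriv y))) t
        - (6 * deriv q t * deriv y t + 6 * q t * deriv (deriv y) t)
        - (3 * deriv (deriv q) t * y t + 3 * deriv q t * deriv y t) :=
    funext fun t => (hP t).deriv
  -- second derivative of Pop q y
  have hP2 : ∀ t, HasDerivAt (deriv (Pop q y))
      (-4 * deriv (deriv (deriv (deriv (deriv y)))) t
        - ((6 * deriv (deriv q) t * deriv y t + 6 * deriv q t * deriv (deriv y) t)
           + (6 * deriv q t * deriv (deriv y) t + 6 * q t * deriv (deriv (deriv y)) t))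
        - ((3 * deriv (deriv (deriv q)) t * y t + 3 * deriv (deriv q) t * deriv y t)
           + (3 * deriv (deriv q) t * deriv y t + 3 * deriv q t * deriv (deriv y) t))) t := by
    intro t
    rw [eA]
    exact (((hdD hy4 t).const_mul (-4)).sub
        ((((hdD hq1 t).const_mul 6).mul (hdD hy1 t)).add
         (((hdD hq' t).const_mul 6).mul (hdD hy2 t)))).sub
      ((((hdD hq2 t).const_mul 3).mul (hdD hy' t)).add
       (((hdD hq1 t).const_mul 3).mul (hdD hy1 t)))
  have eA2 : deriv (deriv (Pop q y)) x =
      -4 * deriv (deriv (deriv (deriv (deriv y)))) x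
        - ((6 * deriv (deriv q) x * deriv y x + 6 * deriv q x * deriv (deriv y) x)
           + (6 * deriv q x * deriv (deriv y) x + 6 * q x * deriv (deriv (deriv y)) x))
        - ((3 * deriv (deriv (deriv q)) x * y x + 3 * deriv (deriv q) x * deriv y x)
           + (3 * deriv (deriv q) x * deriv y x + 3 * deriv q x * deriv (deriv y) x)) :=
    (hP2 x).deriv
  -- derivatives of Lop q y
  have hL : ∀ t, HasDerivAt (Lop q y)
      (deriv (deriv (deriv y)) t + (deriv q t * y t + q t * deriv y t)) t := by
    intro t
    exact (hdD hy2 t).add ((hdD hq' t).mul (hdD hy' t))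
  have eL : deriv (Lop q y) = fun t =>
      deriv (deriv (deriv y)) t + (deriv q t * y t + q t * deriv y t) :=
    funext fun t => (hL t).deriv
  have hL2 : ∀ t, HasDerivAt (deriv (Lop q y))
      (deriv (deriv (deriv (deriv y))) t
        + ((deriv (deriv q) t * y t + deriv q t * deriv y t)
           + (deriv q t * deriv y t + q t * deriv (deriv y) t))) t := by
    intro t
    rw [eL]
    exact (hdD hy3 t).add (((hdD hq1 t).mul (hdD hy' t)).add ((hdD hq' t).mul (hdD hy1 t)))
  have eL2 : deriv (deriv (Lop q y)) = fun t =>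
      deriv (deriv (deriv (deriv y))) t
        + ((deriv (deriv q) t * y t + deriv q t * deriv y t)
           + (deriv q t * deriv y t + q t * deriv (deriv y) t)) :=
    funext fun t => (hL2 t).deriv
  have hL3 : ∀ t, HasDerivAt (deriv (deriv (Lop q y)))
      (deriv (deriv (deriv (deriv (deriv y)))) t
        + (((deriv (deriv (deriv q)) t * y t + deriv (deriv q) t * deriv y t)
            + (deriv (deriv q) t * deriv y t + deriv q t * deriv (deriv y) t))
           + ((deriv (deriv q) t * deriv y t + deriv q t * deriv (deriv y) t)
            + (deriv q t * deriv (deriv y) t + q t * deriv (deriv (deriv y)) t)))) t := by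
    intro t
    rw [eL2]
    exact (hdD hy4 t).add
      ((((hdD hq2 t).mul (hdD hy' t)).add ((hdD hq1 t).mul (hdD hy1 t))).add
       (((hdD hq1 t).mul (hdD hy1 t)).add ((hdD hq' t).mul (hdD hy2 t))))
  have eL3 : deriv (deriv (deriv (Lop q y))) x =
      deriv (deriv (deriv (deriv (deriv y)))) x
        + (((deriv (deriv (deriv q)) x * y x + deriv (deriv q) x * deriv y x)
            + (deriv (deriv q) x * deriv y x + deriv q x * deriv (deriv y) x))
           + ((deriv (deriv q) x * deriv y x + deriv q x * deriv (deriv y) x)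
            + (deriv q x * deriv (deriv y) x + q x * deriv (deriv (deriv y)) x))) :=
    (hL3 x).deriv
  have eL1 : deriv (Lop q y) x =
      deriv (deriv (deriv y)) x + (deriv q x * y x + q x * deriv y x) := (hL x).deriv
  simp only [Lop, Pop] at *
  rw [eA2, eL3, eL1]
  ring
end

section
/- Let B be the operator B(f) = f''' + 4 q f' + 2 q' f and suppose φ is smooth in x, nonvanishing, and satisfies B(φ) = 4 λ φ'. Then the function H(φ) = φ φ'' - (1/2)(φ')² + 2(q - λ)φ² is constant in x; conversely, if φ is nonvanishing and H(φ) is constant in x, then B(φ) = 4 λ φ'. -/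
theorem stmt_9 (q φ : ℝ → ℝ) (lam : ℝ) (hq : ContDiff ℝ (⊤ : ℕ∞) q) (hφ : ContDiff ℝ (⊤ : ℕ∞) φ)
    (hφ0 : ∀ x, φ x ≠ 0) :
    (∀ x, deriv (deriv (deriv φ)) x + 4 * q x * deriv φ x + 2 * deriv q x * φ x =
        4 * lam * deriv φ x) ↔
      (∀ x₁ x₂ : ℝ,
        φ x₁ * deriv (deriv φ) x₁ - (1 / 2) * (deriv φ x₁) ^ 2 +
            2 * (q x₁ - lam) * φ x₁ ^ 2 =
          φ x₂ * deriv (deriv φ) x₂ - (1 / 2) * (deriv φ x₂) ^ 2 +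
            2 * (q x₂ - lam) * φ x₂ ^ 2) := by
  set H : ℝ → ℝ := fun x =>
    φ x * deriv (deriv φ) x - (1 / 2) * (deriv φ x) ^ 2 + 2 * (q x - lam) * φ x ^ 2 with hH
  have hphiInf : ContDiff ℝ (⊤ : ℕ∞) φ := hφ.of_le (by simp)
  have hφ1 : ContDiff ℝ (⊤ : ℕ∞) (deriv φ) := (contDiff_infty_iff_deriv.mp hphiInf).2
  have hφ2 : ContDiff ℝ (⊤ : ℕ∞) (deriv (deriv φ)) := (contDiff_infty_iff_deriv.mp hφ1).2
  have hd : ∀ x, HasDerivAt H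
      (φ x * (deriv (deriv (deriv φ)) x + 4 * q x * deriv φ x + 2 * deriv q x * φ x
        - 4 * lam * deriv φ x)) x := by
    intro x
    have h0 : HasDerivAt φ (deriv φ x) x := (hφ.differentiable (by simp) x).hasDerivAt
    have h1 : HasDerivAt (deriv φ) (deriv (deriv φ) x) x :=
      (hφ1.differentiable (by simp) x).hasDerivAt
    have h2 : HasDerivAt (deriv (deriv φ)) (deriv (deriv (deriv φ)) x) x :=
      (hφ2.differentiable (by simp) x).hasDerivAt
    have hq0 : HasDerivAt q (deriv q x) x := (hq.differentiable (by simp) x).hasDerivAt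
    have := ((h0.mul h2).sub ((h1.pow 2).const_mul (1/2 : ℝ))).add
      (((hq0.sub_const lam).mul (h0.pow 2)).const_mul 2)
    convert this using 1
    case e'_8 => funext y; simp only [hH, Pi.add_apply, Pi.sub_apply, Pi.mul_apply, Pi.pow_apply]; ring
    case e'_9 => push_cast; simp only [Pi.pow_apply]; ring
    all_goals rfl
  constructor
  · intro hB x₁ x₂
    have : ∀ x, HasDerivAt H 0 x := by
      intro x
      have := hd x
      rw [show deriv (deriv (deriv φ)) x + 4 * q x * deriv φ x + 2 * deriv q x * φ x
          - 4 * lam * deriv φ x = 0 by linarith [hB x], mul_zero] at this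
      exact this
    have hc : H x₁ = H x₂ := by
      have := is_const_of_deriv_eq_zero (f := H)
        (fun x => (this x).differentiableAt) (fun x => (this x).deriv) x₁ x₂
      exact this
    simpa [hH] using hc
  · intro hc x
    have hconst : H = fun _ => H 0 := funext fun y => hc y 0
    have hderiv0 : deriv H x = 0 := by rw [hconst]; simp
    have := (hd x).deriv
    rw [hderiv0] at this
    have := (mul_eq_zero.mp this.symm).resolve_left (hφ0 x)
    linarith
end
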